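/- Let ℓ(s) = 1 + |log s| and ℓℓ(s) = 1 + log ℓ(s). For λ < 0, q ∈ [1,∞] and α, β ∈ ℝ, one has ‖s^{λ - 1/q'} ℓ(s)^{-α} ℓℓ(s)^{-β}‖_{L^{q'}(r, 1-r)} ≈ r^{λ} ℓ(r)^{-α} ℓℓ(r)^{-β} for all r ∈ (0,1/4], with constants independent of r. -/

import Mathlib

open MeasureTheory Set
open scoped ENNReal

noncomputable def ell (s : ℝ) : ℝ := 1 + |Real.log s|
noncomputable def ellell (s : ℝ) : ℝ := 1 + Real.log (ell s)

/-!
Write `w(s) = ℓ(s)^{-α} ℓℓ(s)^{-β}`. On `[r, √r]` the values of `ℓ` stay within a factor `2` of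
`ℓ(r)`, so `w(s) ≍ w(r)` there; beyond `√r` the decay `s^λ ≤ r^{λ/2}` beats every power of `ℓ(r)`.
Hence `s^λ w(s) ≲ r^λ w(r)` for `r ≤ s ≤ 1`.

The lower bound comes from the piece `(r, 2r) ⊆ [r, √r]`, where the integrand is
`≍ r^{λ-1/q'} w(r)` on a set of measure `r`. For the upper bound split `s^λ = s^{λ/2} s^{λ/2}`:
the first half times `w(s)` is `≲ r^{λ/2} w(r)`, and `‖s^{λ/2-1/q'}‖_{L^{q'}(r,∞)} ≍ r^{λ/2}`.
-/

lemma one_le_ell (s : ℝ) : 1 ≤ ell s := le_add_of_nonneg_right (abs_nonneg _)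

lemma ell_pos (s : ℝ) : 0 < ell s := one_pos.trans_le (one_le_ell s)

lemma one_le_ellell (s : ℝ) : 1 ≤ ellell s :=
  le_add_of_nonneg_right (Real.log_nonneg (one_le_ell s))

lemma ellell_pos (s : ℝ) : 0 < ellell s := one_pos.trans_le (one_le_ellell s)

lemma ellell_le_ell (s : ℝ) : ellell s ≤ ell s := by
  have := Real.log_le_sub_one_of_pos (ell_pos s)
  rw [ellell]; linarith

lemma ell_of_le_one {s : ℝ} (hs : 0 < s) (hs1 : s ≤ 1) : ell s = 1 - Real.log s := by
  rw [ell, abs_of_nonpos (Real.log_nonpos hs.le hs1), sub_eq_add_neg]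

lemma ell_le_ell {r s : ℝ} (hr : 0 < r) (hrs : r ≤ s) (hs1 : s ≤ 1) : ell s ≤ ell r := by
  rw [ell_of_le_one (hr.trans_le hrs) hs1, ell_of_le_one hr (hrs.trans hs1)]
  linarith [Real.log_le_log hr hrs]

lemma ell_le_two_mul_ell {r s : ℝ} (hr : 0 < r) (hr1 : r ≤ 1) (hs : 0 < s) (hsr : s ≤ √r) :
    ell r ≤ 2 * ell s := by
  have hlog : Real.log s ≤ Real.log r / 2 := by
    rw [← Real.log_sqrt hr.le]; exact Real.log_le_log hs hsr
  rw [ell_of_le_one hr hr1, ell]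
  linarith [neg_le_abs (Real.log s)]

lemma ellell_le_two_mul_ellell {x y : ℝ} (h : ell x ≤ 2 * ell y) : ellell x ≤ 2 * ellell y := by
  have hlog : Real.log (ell x) ≤ Real.log 2 + Real.log (ell y) := by
    rw [← Real.log_mul two_ne_zero (ell_pos y).ne']; exact Real.log_le_log (ell_pos x) h
  have hlog2 : Real.log 2 ≤ 1 := by linarith [Real.log_le_sub_one_of_pos (two_pos (α := ℝ))]
  rw [ellell, ellell]
  linarith [Real.log_nonneg (one_le_ell y)]

lemma rpow_le_two_rpow_abs_mul_rpow {x y : ℝ} (hx : 0 < x) (hy : 0 < y) (hxy : x ≤ 2 * y)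
    (hyx : y ≤ 2 * x) (t : ℝ) : y ^ t ≤ 2 ^ |t| * x ^ t := by
  rcases le_or_gt 0 t with ht | ht
  · rw [abs_of_nonneg ht, ← Real.mul_rpow zero_le_two hx.le]
    exact Real.rpow_le_rpow hy.le hyx ht
  · rw [abs_of_neg ht, Real.rpow_neg zero_le_two, ← div_eq_inv_mul,
      ← Real.div_rpow hx.le zero_le_two]
    exact Real.rpow_le_rpow_of_nonpos (by positivity) (by linarith) ht.le

noncomputable def logWeight (α β s : ℝ) : ℝ := ell s ^ (-α) * ellell s ^ (-β)

lemma logWeight_pos (α β s : ℝ) : 0 < logWeight α β s :=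
  mul_pos (Real.rpow_pos_of_pos (ell_pos s) _) (Real.rpow_pos_of_pos (ellell_pos s) _)

lemma logWeight_le_mul_logWeight {x y : ℝ} (α β : ℝ) (hxy : ell x ≤ 2 * ell y)
    (hyx : ell y ≤ 2 * ell x) :
    logWeight α β y ≤ 2 ^ |α| * 2 ^ |β| * logWeight α β x := by
  have hα := rpow_le_two_rpow_abs_mul_rpow (ell_pos x) (ell_pos y) hxy hyx (-α)
  have hβ := rpow_le_two_rpow_abs_mul_rpow (ellell_pos x) (ellell_pos y)
    (ellell_le_two_mul_ellell hxy) (ellell_le_two_mul_ellell hyx) (-β)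
  rw [abs_neg] at hα hβ
  calc logWeight α β y ≤ (2 ^ |α| * ell x ^ (-α)) * (2 ^ |β| * ellell x ^ (-β)) :=
        mul_le_mul hα hβ (Real.rpow_pos_of_pos (ellell_pos y) _).le
          (mul_pos (by positivity) (Real.rpow_pos_of_pos (ell_pos x) _)).le
    _ = 2 ^ |α| * 2 ^ |β| * logWeight α β x := by rw [logWeight]; ring

lemma ell_comparable_of_le_sqrt {r s : ℝ} (hr : 0 < r) (hr1 : r ≤ 1) (hrs : r ≤ s)
    (hsr : s ≤ √r) : ell s ≤ 2 * ell r ∧ ell r ≤ 2 * ell s := by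
  have hs1 : s ≤ 1 := hsr.trans (Real.sqrt_le_one.mpr hr1)
  exact ⟨(ell_le_ell hr hrs hs1).trans (by linarith [ell_pos r]),
    ell_le_two_mul_ell hr hr1 (hr.trans_le hrs) hsr⟩

lemma logWeight_le_ell_rpow (α β s : ℝ) : logWeight α β s ≤ ell s ^ (|α| + |β|) := by
  rw [Real.rpow_add (ell_pos s)]
  refine mul_le_mul (Real.rpow_le_rpow_of_exponent_le (one_le_ell s) (neg_le_abs α)) ?_
    (Real.rpow_pos_of_pos (ellell_pos s) _).le (Real.rpow_pos_of_pos (ell_pos s) _).le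
  exact (Real.rpow_le_rpow_of_exponent_le (one_le_ellell s) (neg_le_abs β)).trans
    (Real.rpow_le_rpow (ellell_pos s).le (ellell_le_ell s) (abs_nonneg β))

lemma ell_rpow_neg_le_logWeight (α β s : ℝ) : ell s ^ (-(|α| + |β|)) ≤ logWeight α β s := by
  rw [neg_add, Real.rpow_add (ell_pos s)]
  refine mul_le_mul (Real.rpow_le_rpow_of_exponent_le (one_le_ell s) (neg_le_neg (le_abs_self α)))
    ?_ (Real.rpow_pos_of_pos (ell_pos s) _).le (Real.rpow_pos_of_pos (ell_pos s) _).le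
  exact (Real.rpow_le_rpow_of_nonpos (ellell_pos s) (ellell_le_ell s)
    (neg_nonpos.mpr (abs_nonneg β))).trans
    (Real.rpow_le_rpow_of_exponent_le (one_le_ellell s) (neg_le_neg (le_abs_self β)))

lemma exists_ell_rpow_le_mul_rpow_neg {ε : ℝ} (hε : 0 < ε) {c : ℝ} (hc : 0 ≤ c) :
    ∃ K, 0 < K ∧ ∀ s ∈ Ioc (0 : ℝ) 1, ell s ^ c ≤ K * s ^ (-ε) := by
  set δ := ε / (c + 1)
  have hδ : 0 < δ := by positivity
  refine ⟨(1 + 1 / δ) ^ c, by positivity, fun s ⟨hs, hs1⟩ => ?_⟩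
  have hsδ : 1 ≤ s ^ (-δ) := Real.one_le_rpow_of_pos_of_le_one_of_nonpos hs hs1 (by linarith)
  have hlog : -Real.log s ≤ s ^ (-δ) / δ := by
    have := Real.log_le_rpow_div (inv_nonneg.mpr hs.le) hδ
    rwa [Real.log_inv, Real.inv_rpow hs.le, ← Real.rpow_neg hs.le] at this
  have hell : ell s ≤ (1 + 1 / δ) * s ^ (-δ) := by
    rw [ell_of_le_one hs hs1, add_mul, one_mul, one_div_mul_eq_div]
    linarith
  calc ell s ^ c ≤ ((1 + 1 / δ) * s ^ (-δ)) ^ c := Real.rpow_le_rpow (ell_pos s).le hell hc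
    _ = (1 + 1 / δ) ^ c * s ^ (-δ * c) := by
        rw [Real.mul_rpow (by positivity) (by positivity), Real.rpow_mul hs.le]
    _ ≤ (1 + 1 / δ) ^ c * s ^ (-ε) := by
        have hδc : δ * (c + 1) = ε := div_mul_cancel₀ ε (by positivity)
        exact mul_le_mul_of_nonneg_left
          (Real.rpow_le_rpow_of_exponent_ge hs hs1 (by nlinarith)) (by positivity)

lemma exists_rpow_mul_logWeight_le (α β : ℝ) {lam : ℝ} (hlam : lam < 0) :
    ∃ C, 0 < C ∧ ∀ r s : ℝ, 0 < r → r ≤ s → s ≤ 1 →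
      s ^ lam * logWeight α β s ≤ C * (r ^ lam * logWeight α β r) := by
  set c := |α| + |β|
  obtain ⟨K, hK, hell⟩ :=
    exists_ell_rpow_le_mul_rpow_neg (ε := -lam / 2) (by linarith) (c := 2 * c) (by positivity)
  refine ⟨max (2 ^ |α| * 2 ^ |β|) K, lt_max_of_lt_right hK, fun r s hr hrs hs1 => ?_⟩
  have hr1 : r ≤ 1 := hrs.trans hs1
  have hG : 0 < r ^ lam * logWeight α β r :=
    mul_pos (Real.rpow_pos_of_pos hr _) (logWeight_pos α β r)
  rcases le_or_gt s √r with hsr | hsr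
  · obtain ⟨hsr', hrs'⟩ := ell_comparable_of_le_sqrt hr hr1 hrs hsr
    calc s ^ lam * logWeight α β s ≤ r ^ lam * (2 ^ |α| * 2 ^ |β| * logWeight α β r) :=
          mul_le_mul (Real.rpow_le_rpow_of_nonpos hr hrs hlam.le)
            (logWeight_le_mul_logWeight α β hrs' hsr') (logWeight_pos α β s).le
            (Real.rpow_pos_of_pos hr _).le
      _ = 2 ^ |α| * 2 ^ |β| * (r ^ lam * logWeight α β r) := by ring
      _ ≤ _ := mul_le_mul_of_nonneg_right (le_max_left _ _) hG.le
  · have hpow : s ^ lam ≤ r ^ (lam / 2) := by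
      calc s ^ lam ≤ √r ^ lam :=
            Real.rpow_le_rpow_of_nonpos (Real.sqrt_pos.2 hr) hsr.le hlam.le
        _ = r ^ (lam / 2) := by rw [Real.sqrt_eq_rpow, ← Real.rpow_mul hr.le]; ring_nf
    have hw : logWeight α β s ≤ ell r ^ c :=
      (logWeight_le_ell_rpow α β s).trans
        (Real.rpow_le_rpow (ell_pos s).le (ell_le_ell hr hrs hs1) (by positivity))
    have hlog : ell r ^ (2 * c) ≤ K * r ^ (lam / 2) := by
      simpa [neg_div] using hell r ⟨hr, hr1⟩
    calc s ^ lam * logWeight α β s ≤ r ^ (lam / 2) * (ell r ^ (2 * c) * ell r ^ (-c)) := by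
          rw [← Real.rpow_add (ell_pos r)]
          exact mul_le_mul hpow (by ring_nf; exact hw) (logWeight_pos α β s).le (by positivity)
      _ ≤ r ^ (lam / 2) * (K * r ^ (lam / 2) * ell r ^ (-c)) := by
          have := Real.rpow_pos_of_pos (ell_pos r) (-c)
          gcongr
      _ = K * (r ^ lam * ell r ^ (-c)) := by
          rw [← mul_assoc, ← mul_assoc, mul_comm _ K, mul_assoc K, ← Real.rpow_add hr]
          ring_nf
      _ ≤ K * (r ^ lam * logWeight α β r) := by
          gcongr; exact ell_rpow_neg_le_logWeight α β r
      _ ≤ _ := mul_le_mul_of_nonneg_right (le_max_right _ _) hG.le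

lemma ENNReal.toReal_one_div (p : ℝ≥0∞) : (1 / p).toReal = 1 / p.toReal := by
  rw [ENNReal.toReal_div, ENNReal.toReal_one]

lemma ofReal_mul_rpow_le_eLpNorm {f : ℝ → ℝ} {p : ℝ≥0∞} (hp : p ≠ 0) {a b m : ℝ} (hab : a < b)
    (hm : 0 ≤ m) (hf : ∀ s ∈ Ioo a b, m ≤ f s) :
    ENNReal.ofReal (m * (b - a) ^ (1 / p).toReal) ≤ eLpNorm f p (volume.restrict (Ioo a b)) := by
  have hμ : volume.restrict (Ioo a b) ≠ 0 := by
    simpa [Measure.restrict_eq_zero] using hab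
  calc ENNReal.ofReal (m * (b - a) ^ (1 / p).toReal)
      = eLpNorm (fun _ => m) p (volume.restrict (Ioo a b)) := by
        rw [eLpNorm_const _ hp hμ, Measure.restrict_apply_univ, Real.volume_Ioo,
          Real.enorm_eq_ofReal hm, ENNReal.ofReal_rpow_of_nonneg (by linarith) (by positivity),
          ENNReal.ofReal_mul hm, ENNReal.toReal_one_div]
    _ ≤ eLpNorm f p (volume.restrict (Ioo a b)) := by
        refine eLpNorm_mono_ae ((ae_restrict_iff' measurableSet_Ioo).2 (ae_of_all _ ?_))
        intro s hs
        rw [Real.norm_of_nonneg hm, Real.norm_of_nonneg (hm.trans (hf s hs))]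
        exact hf s hs

lemma exists_eLpNorm_rpow_Ioi_le {p : ℝ≥0∞} (hp : p ≠ 0) {a : ℝ} (ha : a < 0) :
    ∃ K, 0 < K ∧ ∀ r > 0,
      eLpNorm (fun s : ℝ => s ^ (a - (1 / p).toReal)) p (volume.restrict (Ioi r)) ≤
        ENNReal.ofReal (K * r ^ a) := by
  by_cases htop : p = ∞
  · subst htop
    refine ⟨1, one_pos, fun r hr => ?_⟩
    rw [eLpNorm_exponent_top, one_mul]
    refine eLpNormEssSup_le_of_ae_bound ((ae_restrict_iff' measurableSet_Ioi).2 (ae_of_all _ ?_))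
    intro s hs
    have hs0 : 0 < s := hr.trans hs
    rw [ENNReal.div_top, ENNReal.toReal_zero, sub_zero,
      Real.norm_of_nonneg (Real.rpow_pos_of_pos hs0 _).le]
    exact Real.rpow_le_rpow_of_nonpos hr hs.le ha.le
  set t := p.toReal
  have ht : 0 < t := ENNReal.toReal_pos hp htop
  have hat : a * t - 1 < -1 := by nlinarith
  have hat' : 0 < -(a * t) := by nlinarith
  refine ⟨(-(a * t))⁻¹ ^ (1 / t), by positivity, fun r hr => le_of_eq ?_⟩
  have hpow : ∀ s ∈ Ioi r, ‖s ^ (a - (1 / p).toReal)‖ₑ ^ t = ENNReal.ofReal (s ^ (a * t - 1)) := by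
    intro s hs
    have hs0 : 0 < s := hr.trans hs
    rw [Real.enorm_eq_ofReal (Real.rpow_pos_of_pos hs0 _).le,
      ENNReal.ofReal_rpow_of_nonneg (Real.rpow_pos_of_pos hs0 _).le ht.le,
      ← Real.rpow_mul hs0.le, ENNReal.toReal_one_div, sub_mul, one_div_mul_cancel ht.ne']
  have hint : ∫⁻ s in Ioi r, ENNReal.ofReal (s ^ (a * t - 1)) =
      ENNReal.ofReal ((-(a * t))⁻¹ * r ^ (a * t)) := by
    rw [← ofReal_integral_eq_lintegral_ofReal (integrableOn_Ioi_rpow_of_lt hat hr)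
      ((ae_restrict_iff' measurableSet_Ioi).2 (ae_of_all _
        fun s hs => (Real.rpow_pos_of_pos (hr.trans hs) _).le)),
      integral_Ioi_rpow_of_lt hat hr, sub_add_cancel, neg_div, div_eq_inv_mul, inv_neg,
      neg_mul]
  rw [eLpNorm_eq_lintegral_rpow_enorm_toReal hp htop, setLIntegral_congr_fun measurableSet_Ioi hpow,
    hint, ENNReal.ofReal_rpow_of_nonneg (by positivity) (by positivity),
    Real.mul_rpow (by positivity) (by positivity), ← Real.rpow_mul hr.le]
  congr 3
  rw [mul_one_div]
  exact mul_div_cancel_right₀ a ht.ne'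

lemma exists_eLpNorm_rpow_mul_logWeight_le (α β : ℝ) {lam : ℝ} (hlam : lam < 0) {p : ℝ≥0∞}
    (hp : p ≠ 0) :
    ∃ C, 0 < C ∧ ∀ r > 0,
      eLpNorm (fun s : ℝ => s ^ (lam - (1 / p).toReal) * logWeight α β s) p
          (volume.restrict (Ioo r (1 - r))) ≤
        ENNReal.ofReal (C * (r ^ lam * logWeight α β r)) := by
  obtain ⟨C, hC, hdecay⟩ := exists_rpow_mul_logWeight_le α β (by linarith : lam / 2 < 0)
  obtain ⟨K, hK, hnorm⟩ := exists_eLpNorm_rpow_Ioi_le hp (by linarith : lam / 2 < 0)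
  refine ⟨C * K, mul_pos hC hK, fun r hr => ?_⟩
  have hw := logWeight_pos α β r
  have hpointwise : ∀ s ∈ Ioo r (1 - r),
      ‖s ^ (lam - (1 / p).toReal) * logWeight α β s‖ ≤
        C * (r ^ (lam / 2) * logWeight α β r) * ‖s ^ (lam / 2 - (1 / p).toReal)‖ := by
    rintro s ⟨hrs, hs1⟩
    have hs : 0 < s := hr.trans hrs
    rw [Real.norm_of_nonneg (mul_pos (Real.rpow_pos_of_pos hs _) (logWeight_pos α β s)).le,
      Real.norm_of_nonneg (Real.rpow_pos_of_pos hs _).le,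
      show lam - (1 / p).toReal = lam / 2 + (lam / 2 - (1 / p).toReal) by ring,
      Real.rpow_add hs, mul_right_comm]
    exact mul_le_mul_of_nonneg_right (hdecay r s hr hrs.le (by linarith))
      (Real.rpow_pos_of_pos hs _).le
  calc eLpNorm (fun s : ℝ => s ^ (lam - (1 / p).toReal) * logWeight α β s) p
        (volume.restrict (Ioo r (1 - r)))
      ≤ ENNReal.ofReal (C * (r ^ (lam / 2) * logWeight α β r)) *
          eLpNorm (fun s : ℝ => s ^ (lam / 2 - (1 / p).toReal)) p
            (volume.restrict (Ioo r (1 - r))) :=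
        eLpNorm_le_mul_eLpNorm_of_ae_le_mul
          ((ae_restrict_iff' measurableSet_Ioo).2 (ae_of_all _ hpointwise)) p
    _ ≤ ENNReal.ofReal (C * (r ^ (lam / 2) * logWeight α β r)) *
          eLpNorm (fun s : ℝ => s ^ (lam / 2 - (1 / p).toReal)) p (volume.restrict (Ioi r)) := by
        gcongr
        exact Ioo_subset_Ioi_self
    _ ≤ ENNReal.ofReal (C * (r ^ (lam / 2) * logWeight α β r)) *
          ENNReal.ofReal (K * r ^ (lam / 2)) := by
        gcongr
        exact hnorm r hr
    _ = ENNReal.ofReal (C * K * (r ^ lam * logWeight α β r)) := by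
        rw [← ENNReal.ofReal_mul (by positivity)]
        congr 1
        rw [show lam = lam / 2 + lam / 2 by ring, Real.rpow_add hr]
        ring_nf

lemma exists_ofReal_mul_le_eLpNorm_rpow_mul_logWeight (α β lam : ℝ) {p : ℝ≥0∞} (hp : p ≠ 0) :
    ∃ c, 0 < c ∧ ∀ r ∈ Ioc (0 : ℝ) (1 / 4),
      ENNReal.ofReal (c * (r ^ lam * logWeight α β r)) ≤
        eLpNorm (fun s : ℝ => s ^ (lam - (1 / p).toReal) * logWeight α β s) p
          (volume.restrict (Ioo r (1 - r))) := by
  set t := lam - (1 / p).toReal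
  set M : ℝ := 2 ^ |t| * (2 ^ |α| * 2 ^ |β|) with hM
  refine ⟨M⁻¹, by positivity, fun r ⟨hr, hr4⟩ => ?_⟩
  have hw := logWeight_pos α β r
  have h2r : 2 * r ≤ √r := Real.le_sqrt_of_sq_le (by nlinarith)
  have hcomparable : ∀ s ∈ Ioo r (2 * r), M⁻¹ * (r ^ t * logWeight α β r) ≤
      s ^ t * logWeight α β s := by
    rintro s ⟨hrs, hs2⟩
    have hs : 0 < s := hr.trans hrs
    obtain ⟨hsr, hrs'⟩ := ell_comparable_of_le_sqrt hr (by linarith) hrs.le (hs2.le.trans h2r)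
    have hpow := rpow_le_two_rpow_abs_mul_rpow hs hr hs2.le (by linarith) t
    rw [inv_mul_le_iff₀ (by positivity)]
    calc r ^ t * logWeight α β r
        ≤ (2 ^ |t| * s ^ t) * (2 ^ |α| * 2 ^ |β| * logWeight α β s) :=
          mul_le_mul hpow (logWeight_le_mul_logWeight α β hsr hrs') hw.le (by positivity)
      _ = M * (s ^ t * logWeight α β s) := by rw [hM]; ring
  calc ENNReal.ofReal (M⁻¹ * (r ^ lam * logWeight α β r))
      = ENNReal.ofReal (M⁻¹ * (r ^ t * logWeight α β r) * (2 * r - r) ^ (1 / p).toReal) := by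
        rw [two_mul, add_sub_cancel_right,
          show r ^ lam = r ^ t * r ^ (1 / p).toReal by rw [← Real.rpow_add hr, sub_add_cancel]]
        ring_nf
    _ ≤ eLpNorm (fun s : ℝ => s ^ t * logWeight α β s) p (volume.restrict (Ioo r (2 * r))) :=
        ofReal_mul_rpow_le_eLpNorm hp (by linarith) (by positivity) hcomparable
    _ ≤ _ := eLpNorm_mono_measure _
        (Measure.restrict_mono (Ioo_subset_Ioo_right (by linarith)) le_rfl)

theorem stmt11_general (q q' : ℝ≥0∞) (hconj : 1 / q + 1 / q' = 1)
    (α β lam : ℝ) (hlam : lam < 0) :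
    ∃ c C : ℝ, 0 < c ∧ 0 < C ∧
      ∀ r ∈ Set.Ioc (0 : ℝ) (1 / 4),
        ENNReal.ofReal (c * (r ^ lam * ell r ^ (-α) * ellell r ^ (-β))) ≤
            eLpNorm (fun s : ℝ => s ^ (lam - (1 / q').toReal) * ell s ^ (-α) * ellell s ^ (-β))
              q' (volume.restrict (Set.Ioo r (1 - r))) ∧
          eLpNorm (fun s : ℝ => s ^ (lam - (1 / q').toReal) * ell s ^ (-α) * ellell s ^ (-β))
              q' (volume.restrict (Set.Ioo r (1 - r))) ≤
            ENNReal.ofReal (C * (r ^ lam * ell r ^ (-α) * ellell r ^ (-β))) := by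
  have hq' : q' ≠ 0 := by
    rintro rfl
    simp at hconj
  obtain ⟨c, hc, hlower⟩ := exists_ofReal_mul_le_eLpNorm_rpow_mul_logWeight α β lam hq'
  obtain ⟨C, hC, hupper⟩ := exists_eLpNorm_rpow_mul_logWeight_le α β hlam hq'
  have hw : ∀ x e : ℝ, x ^ e * ell x ^ (-α) * ellell x ^ (-β) = x ^ e * logWeight α β x :=
    fun _ _ => mul_assoc _ _ _
  simp only [hw]
  exact ⟨c, C, hc, hC, fun r hr => ⟨hlower r hr, hupper r hr.1⟩⟩

/-- For `λ < 0`: `‖s^{λ-1/q'} ℓ(s)^{-α} ℓℓ(s)^{-β}‖_{L^{q'}(r,1-r)} ≈ r^λ ℓ(r)^{-α} ℓℓ(r)^{-β}`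
for all `r ∈ (0,1/4]`, with constants independent of `r`. -/
theorem stmt11 (q q' : ℝ≥0∞) (hq : 1 ≤ q) (hconj : 1 / q + 1 / q' = 1)
    (α β lam : ℝ) (hlam : lam < 0) :
    ∃ c C : ℝ, 0 < c ∧ 0 < C ∧
      ∀ r ∈ Set.Ioc (0 : ℝ) (1 / 4),
        ENNReal.ofReal (c * (r ^ lam * ell r ^ (-α) * ellell r ^ (-β))) ≤
            eLpNorm (fun s : ℝ => s ^ (lam - (1 / q').toReal) * ell s ^ (-α) * ellell s ^ (-β))
              q' (volume.restrict (Set.Ioo r (1 - r))) ∧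
          eLpNorm (fun s : ℝ => s ^ (lam - (1 / q').toReal) * ell s ^ (-α) * ellell s ^ (-β))
              q' (volume.restrict (Set.Ioo r (1 - r))) ≤
            ENNReal.ofReal (C * (r ^ lam * ell r ^ (-α) * ellell r ^ (-β))) :=
  stmt11_general q q' hconj α β lam hlam
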